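/- Let Γ be a nonempty finite set and N a quadratic normalisation on Γ satisfying Condition (home). For all q, c, d ∈ Γ, set (a, b) := N̄(c, d); (a', q₀') := N̄(q, a); (b', q₀'') := N̄(q₀', b); (c', q₁') := N̄(q, c); (d', q₁'') := N̄(q₁', d). Then q₀'' = q₁'' and N̄(a', b') = N̄(c', d'). -/
import Mathlib


namespace Stmt2

variable {α : Type}

/-- Apply the two-letter normalisation `nf` at (1-indexed) position `i` of a word. -/
def applyAtL (nf : α → α → List α) : ℕ → List α → List α
  | 1, x :: y :: s => nf x y ++ s
  | n + 2, x :: s => x :: applyAtL nf (n + 1) s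
  | _, w => w

/-- Apply the two-letter normalisation along a finite sequence of positions
(the first position in the list is applied first). -/
def seqApplyL (nf : α → α → List α) (l : List ℕ) (w : List α) : List α :=
  l.foldl (fun w i => applyAtL nf i w) w

/-- key step in the proof of Proposition `prop-home`: for a quadratic
normalisation `(Γ,N)` satisfying Condition (home), with
`N̄(x,y) = (τ_x(y), σ_y(x)) = (tau x y, sig y x)`, setting
`(a,b) := N̄(c,d)`, `(a',q₀') := N̄(q,a)`, `(b',q₀'') := N̄(q₀',b)`,
`(c',q₁') := N̄(q,c)`, `(d',q₁'') := N̄(q₁',d)`,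
one has `q₀'' = q₁''` and `N̄(a',b') = N̄(c',d')`. -/
theorem pasting_square_diagrams
    {Γ : Type} [Fintype Γ] [Nonempty Γ]
    (N : List Γ → List Γ) (tau sig : Γ → Γ → Γ)
    (hlen : ∀ w : List Γ, (N w).length = w.length)
    (hone : ∀ x : Γ, N [x] = [x])
    (habs : ∀ u w v : List Γ, w ≠ [] → N (u ++ N w ++ v) = N (u ++ w ++ v))
    (hquad₁ : ∀ w : List Γ, w ≠ [] →
      (N w = w ↔ ∀ p s : List Γ, ∀ x y : Γ, w = p ++ [x, y] ++ s → N [x, y] = [x, y]))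
    (hquad₂ : ∀ w : List Γ, w ≠ [] →
      ∃ l : List ℕ, N w = seqApplyL (fun x y => N [x, y]) l w)
    (hNbar : ∀ x y : Γ, N [x, y] = [tau x y, sig y x])
    (hhome : ∀ x y z : Γ,
      N [x, y, z] = seqApplyL (fun a b => N [a, b]) [1, 2, 1] [x, y, z] ∧
      N [x, y, z] = seqApplyL (fun a b => N [a, b]) [2, 1, 2, 1] [x, y, z]) :
    ∀ q c d a b a' q₀' b' q₀'' c' q₁' d' q₁'' : Γ,
      a = tau c d → b = sig d c →
      a' = tau q a → q₀' = sig a q →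
      b' = tau q₀' b → q₀'' = sig b q₀' →
      c' = tau q c → q₁' = sig c q →
      d' = tau q₁' d → q₁'' = sig d q₁' →
      q₀'' = q₁'' ∧ (tau a' b', sig b' a') = (tau c' d', sig d' c') := by
  intro q c d a b a' q₀' b' q₀'' c' q₁' d' q₁''
  intro ha hb ha' hq0' hb' hq0'' hc' hq1' hd' hq1''
  subst ha hb ha' hq0' hb' hq0'' hc' hq1' hd' hq1''
  obtain ⟨h1, h2⟩ := hhome q c d
  rw [h1] at h2
  simp only [seqApplyL, List.foldl, applyAtL, hNbar, List.cons_append, List.nil_append] at h2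
  simp only [List.cons.injEq, and_true] at h2
  obtain ⟨e1, e2, e3⟩ := h2
  exact ⟨e3.symm, Prod.ext e1.symm e2.symm⟩

end Stmt2
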